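/- Let C > 0 and let g : [0,T] × [0,L] → ℝ be a function such that |g(t,x) - g(t,y)| ≤ C·|x - y| for all t, x, y, and such that for all t₁ < t₂ in [0,T], x ∈ [0,L], and all η with 0 < η and [x-η, x+η] ⊆ [0,L], one has (1/η)·∫_{x-η}^{x+η} |g(t₁,ξ) - g(t₂,ξ)| dξ ≤ C·|t₂ - t₁|^{1/2}·η^{-1/2}. Then there is a constant C' (depending only on C, T, L) such that |g(t₁,x) - g(t₂,x)| ≤ C'·|t₁ - t₂|^{1/3} for all t₁, t₂ ∈ [0,T] and x ∈ [0,L] with |t₁ - t₂| ≤ min(L/2, 1)³ (say), i.e. g is 1/3-Hölder continuous in time. -/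

import Mathlib

/-!
Fix `t₁ < t₂`, put `d = t₂ - t₁` and `f = g t₁ - g t₂`, which is `2C`-Lipschitz in space. Around any
`x` there is a window `[c - η, c + η] ⊆ [0, L]` whose points lie within `2η` of `x`, so
`|f x| ≤ (average of |f| over the window) + 4Cη ≤ C d^{1/2} η^{-1/2} / 2 + 4Cη`.
The choice `η = d^{1/3}` balances the two terms and gives `|f x| ≤ (9/2) C d^{1/3}`.
-/

open MeasureTheory intervalIntegral Set
open scoped NNReal

theorem abs_le_average_add_of_lipschitzOnWith {f : ℝ → ℝ} {K : ℝ≥0} {s : Set ℝ} {a b x r : ℝ}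
    (hf : LipschitzOnWith K f s) (hab : a < b) (habs : Icc a b ⊆ s) (hx : x ∈ s)
    (hr : ∀ ξ ∈ Icc a b, |x - ξ| ≤ r) :
    |f x| ≤ (b - a)⁻¹ * (∫ ξ in a..b, |f ξ|) + K * r := by
  have hpt : ∀ ξ ∈ Icc a b, |f x| - K * r ≤ |f ξ| := by
    intro ξ hξ
    have hdist := hf.dist_le_mul x hx ξ (habs hξ)
    rw [Real.dist_eq, Real.dist_eq] at hdist
    have hKr : (K : ℝ) * |x - ξ| ≤ K * r := mul_le_mul_of_nonneg_left (hr ξ hξ) K.2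
    linarith [abs_sub_abs_le_abs_sub (f x) (f ξ)]
  have hint : IntervalIntegrable (fun ξ => |f ξ|) volume a b :=
    (hf.continuousOn.mono habs).abs.intervalIntegrable_of_Icc hab.le
  have hmono := integral_mono_on hab.le intervalIntegrable_const hint hpt
  rw [intervalIntegral.integral_const, smul_eq_mul] at hmono
  linarith [(le_inv_mul_iff₀ (sub_pos.2 hab)).2 hmono]

theorem exists_abs_sub_le_and_Icc_subset_Icc {a b x η : ℝ} (hη : 0 ≤ η) (hab : 2 * η ≤ b - a)
    (hx : x ∈ Icc a b) : ∃ c, |x - c| ≤ η ∧ Icc (c - η) (c + η) ⊆ Icc a b := by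
  refine ⟨max (a + η) (min x (b - η)), ?_, fun ξ hξ => ⟨?_, ?_⟩⟩
  · rw [abs_le]
    constructor <;> cases max_cases (a + η) (min x (b - η)) <;>
      cases min_cases x (b - η) <;> linarith [hx.1, hx.2]
  · linarith [hξ.1, le_max_left (a + η) (min x (b - η))]
  · linarith [hξ.2, max_le (by linarith : a + η ≤ b - η) (min_le_right x (b - η))]

theorem abs_le_of_lipschitzOnWith_of_average_le {f : ℝ → ℝ} {K : ℝ≥0} {a b x η M : ℝ}
    (hf : LipschitzOnWith K f (Icc a b)) (hx : x ∈ Icc a b) (hη : 0 < η) (hab : 2 * η ≤ b - a)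
    (havg : ∀ c, Icc (c - η) (c + η) ⊆ Icc a b →
      (1 / η) * ∫ ξ in (c - η)..(c + η), |f ξ| ≤ M) :
    |f x| ≤ M / 2 + 2 * K * η := by
  obtain ⟨c, hxc, hc⟩ := exists_abs_sub_le_and_Icc_subset_Icc hη.le hab hx
  have hnear : ∀ ξ ∈ Icc (c - η) (c + η), |x - ξ| ≤ 2 * η := fun ξ hξ => by
    rw [abs_le] at hxc ⊢
    constructor <;> linarith [hξ.1, hξ.2]
  calc |f x| ≤ (c + η - (c - η))⁻¹ * (∫ ξ in (c - η)..(c + η), |f ξ|) + K * (2 * η) :=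
        abs_le_average_add_of_lipschitzOnWith hf (by linarith) hc hx hnear
    _ = (1 / η * ∫ ξ in (c - η)..(c + η), |f ξ|) / 2 + 2 * K * η := by
        rw [show c + η - (c - η) = 2 * η by ring]
        field_simp
    _ ≤ M / 2 + 2 * K * η := by gcongr; exact havg c hc

theorem rpow_half_mul_rpow_third_rpow_neg_half {d : ℝ} (hd : 0 ≤ d) :
    d ^ ((1:ℝ)/2) * (d ^ ((1:ℝ)/3)) ^ (-(1:ℝ)/2) = d ^ ((1:ℝ)/3) := by
  rw [← Real.rpow_mul hd, ← Real.rpow_add' hd (by norm_num)]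
  norm_num

theorem rpow_third_le_of_le_pow_three {d m : ℝ} (hd : 0 ≤ d) (hm : 0 ≤ m) (hdm : d ≤ m ^ 3) :
    d ^ ((1:ℝ)/3) ≤ m := by
  rw [one_div, Real.rpow_inv_le_iff_of_pos hd hm (by norm_num)]
  exact_mod_cast hdm

theorem abs_le_mul_rpow_third_of_lipschitzOnWith_of_average_le {f : ℝ → ℝ} {K : ℝ≥0}
    {a b x C d : ℝ} (hf : LipschitzOnWith K f (Icc a b)) (hx : x ∈ Icc a b) (hd : 0 < d)
    (hdab : d ≤ ((b - a) / 2) ^ 3)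
    (havg : ∀ c η, 0 < η → Icc (c - η) (c + η) ⊆ Icc a b →
      (1 / η) * ∫ ξ in (c - η)..(c + η), |f ξ| ≤ C * d ^ ((1:ℝ)/2) * η ^ (-(1:ℝ)/2)) :
    |f x| ≤ (C / 2 + 2 * K) * d ^ ((1:ℝ)/3) := by
  have hη : 0 < d ^ ((1:ℝ)/3) := Real.rpow_pos_of_pos hd _
  have hab : 2 * d ^ ((1:ℝ)/3) ≤ b - a := by
    have := rpow_third_le_of_le_pow_three hd.le (by linarith [hx.1, hx.2]) hdab
    linarith
  have h := abs_le_of_lipschitzOnWith_of_average_le hf hx hη hab fun c hc =>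
    (havg c _ hη hc).trans_eq (by rw [mul_assoc, rpow_half_mul_rpow_third_rpow_neg_half hd.le])
  linarith

theorem stmt_8_general (C T L : ℝ) (hC : 0 < C) (hL : 0 < L)
    (g : ℝ → ℝ → ℝ)
    (hLip : ∀ t ∈ Icc 0 T, ∀ x ∈ Icc 0 L, ∀ y ∈ Icc 0 L,
      |g t x - g t y| ≤ C * |x - y|)
    (hAvg : ∀ t₁ ∈ Icc 0 T, ∀ t₂ ∈ Icc 0 T, t₁ < t₂ →
      ∀ x ∈ Icc 0 L, ∀ η : ℝ, 0 < η → Icc (x - η) (x + η) ⊆ Icc 0 L →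
        (1/η) * ∫ ξ in (x - η)..(x + η), |g t₁ ξ - g t₂ ξ|
          ≤ C * |t₂ - t₁| ^ ((1:ℝ)/2) * η ^ (-(1:ℝ)/2)) :
    ∃ C' : ℝ, 0 < C' ∧ ∀ t₁ ∈ Icc 0 T, ∀ t₂ ∈ Icc 0 T, ∀ x ∈ Icc 0 L,
      |t₁ - t₂| ≤ (min (L/2) 1)^3 →
        |g t₁ x - g t₂ x| ≤ C' * |t₁ - t₂| ^ ((1:ℝ)/3) := by
  have hLip' : ∀ t ∈ Icc 0 T, LipschitzOnWith C.toNNReal (g t) (Icc 0 L) := fun t ht =>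
    .of_dist_le' fun x hx y hy => by simpa only [Real.dist_eq] using hLip t ht x hx y hy
  have hmin : (min (L/2) 1) ^ 3 ≤ ((L - 0) / 2) ^ 3 := by
    rw [sub_zero]
    gcongr
    exact min_le_left _ _
  have key : ∀ t₁ ∈ Icc 0 T, ∀ t₂ ∈ Icc 0 T, t₁ < t₂ → ∀ x ∈ Icc 0 L,
      t₂ - t₁ ≤ (min (L/2) 1)^3 → |g t₁ x - g t₂ x| ≤ 9 / 2 * C * (t₂ - t₁) ^ ((1:ℝ)/3) := by
    intro t₁ ht₁ t₂ ht₂ hlt x hx hsmall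
    have hd := sub_pos.2 hlt
    have h := abs_le_mul_rpow_third_of_lipschitzOnWith_of_average_le
      ((hLip' t₁ ht₁).sub (hLip' t₂ ht₂)) hx hd (hsmall.trans hmin) fun c η hη hc => by
        simpa only [abs_of_pos hd] using
          hAvg t₁ ht₁ t₂ ht₂ hlt c (hc ⟨by linarith, by linarith⟩) η hη hc
    push_cast [Real.coe_toNNReal C hC.le] at h
    linarith
  refine ⟨9 / 2 * C, by positivity, fun t₁ ht₁ t₂ ht₂ x hx hts => ?_⟩
  rcases lt_trichotomy t₁ t₂ with h | rfl | h
  · rw [abs_sub_comm t₁ t₂, abs_of_pos (sub_pos.2 h)] at hts ⊢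
    exact key t₁ ht₁ t₂ ht₂ h x hx hts
  · simp
  · rw [abs_of_pos (sub_pos.2 h)] at hts ⊢
    rw [abs_sub_comm]
    exact key t₂ ht₂ t₁ ht₁ h x hx hts

theorem stmt_8 (C T L : ℝ) (hC : 0 < C) (hT : 0 < T) (hL : 0 < L)
    (g : ℝ → ℝ → ℝ)
    (hLip : ∀ t ∈ Icc 0 T, ∀ x ∈ Icc 0 L, ∀ y ∈ Icc 0 L,
      |g t x - g t y| ≤ C * |x - y|)
    (hAvg : ∀ t₁ ∈ Icc 0 T, ∀ t₂ ∈ Icc 0 T, t₁ < t₂ →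
      ∀ x ∈ Icc 0 L, ∀ η : ℝ, 0 < η → Icc (x - η) (x + η) ⊆ Icc 0 L →
        (1/η) * ∫ ξ in (x - η)..(x + η), |g t₁ ξ - g t₂ ξ|
          ≤ C * |t₂ - t₁| ^ ((1:ℝ)/2) * η ^ (-(1:ℝ)/2)) :
    ∃ C' : ℝ, 0 < C' ∧ ∀ t₁ ∈ Icc 0 T, ∀ t₂ ∈ Icc 0 T, ∀ x ∈ Icc 0 L,
      |t₁ - t₂| ≤ (min (L/2) 1)^3 →
        |g t₁ x - g t₂ x| ≤ C' * |t₁ - t₂| ^ ((1:ℝ)/3) :=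
  stmt_8_general C T L hC hL g hLip hAvg
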